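/- Let m ≥ 3 and n ≥ 0 be integers, write n = pm + t with p ≥ 0 and 0 ≤ t ≤ m-1, and let I_n = {n - 2r : 0 ≤ r ≤ n} ⊆ ℤ. For s ∈ ℤ let ν_s(X) denote the number of elements of a finite set X ⊆ ℤ congruent to s modulo m. Then 2·ν_0(I_n) + ν_1(I_n) + ν_{-1}(I_n) equals 4p+2 if t ≠ m-1, and equals 4p+4 if t = m-1. -/

import Mathlib

/-- `I n = {n - 2r : 0 ≤ r ≤ n}` as a finite set of integers. -/
def Iset (n : ℕ) : Finset ℤ :=
  (Finset.range (n + 1)).image fun r : ℕ => (n : ℤ) - 2 * (r : ℤ)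

/-- `ν_s(X)`: the number of elements of `X` congruent to `s` modulo `m`. -/
def nu (m : ℕ) (s : ℤ) (X : Finset ℤ) : ℕ :=
  (X.filter fun x : ℤ => ((x : ZMod m) = (s : ZMod m))).card

/-! $I_n$ is symmetric under negation, so $ν_{-1}(I_n) = ν_1(I_n)$ and the quantity is
$2(ν_0 + ν_1)$. The elements $n - 2r$ of $I_n$ together with their predecessors $n - 2r - 1$ are
the $2n + 2$ consecutive integers $-n-1, …, n$, so $ν_0 + ν_1$ is the number of multiples of $m$
among them: $⌊n/m⌋$ positive ones, $⌊(n+1)/m⌋$ negative ones, and $0$. For $n = pm + t$ this is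
$2p + 1$, plus one more exactly when $m ∣ n + 1$, i.e. $t = m - 1$. -/

open Finset

namespace Nat

variable {P Q : ℕ → Prop} [DecidablePred P] [DecidablePred Q]

theorem count_two_mul (N : ℕ) :
    count P (2 * N) = count (fun i => P (2 * i)) N + count (fun i => P (2 * i + 1)) N := by
  induction N with
  | zero => simp
  | succ N ih =>
    rw [show 2 * (N + 1) = 2 * N + 1 + 1 by ring, count_succ, count_succ, ih, count_succ,
      count_succ]
    ring

theorem count_eq_count_of_reflect {K : ℕ} (h : ∀ j < K, P j ↔ Q (K - 1 - j)) :
    count P K = count Q K := by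
  rw [count_eq_card_filter_range, count_eq_card_filter_range]
  refine card_nbij' (K - 1 - ·) (K - 1 - ·) ?_ ?_ ?_ ?_ <;> intro j hj <;>
    simp only [coe_filter, Set.mem_ofPred_eq, mem_range] at hj ⊢
  · exact ⟨by omega, (h j hj.1).1 hj.2⟩
  · refine ⟨by omega, (h _ (by omega)).2 ?_⟩
    rw [show K - 1 - (K - 1 - j) = j by omega]; exact hj.2
  all_goals omega

end Nat

lemma nu_Iset (m n : ℕ) (s : ℤ) :
    nu m s (Iset n) = Nat.count (fun r => (((n : ℤ) - 2 * r : ℤ) : ZMod m) = s) (n + 1) := by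
  rw [nu, Iset, filter_image, card_image_of_injective _ (fun a b h => by simp at h; omega),
    Nat.count_eq_card_filter_range]

lemma nu_neg_Iset (m n : ℕ) (s : ℤ) : nu m (-s) (Iset n) = nu m s (Iset n) := by
  rw [nu_Iset, nu_Iset]
  refine Nat.count_eq_count_of_reflect fun j hj => ?_
  rw [Nat.add_sub_cancel]
  push_cast [Nat.cast_sub (show j ≤ n by omega)]
  constructor <;> intro h <;> linear_combination -h

lemma nu_zero_add_nu_one_Iset (m n : ℕ) :
    nu m 0 (Iset n) + nu m 1 (Iset n) = Nat.count (fun j => (j : ZMod m) = n) (2 * (n + 1)) := by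
  rw [nu_Iset, nu_Iset, Nat.count_two_mul]
  congr 1 <;> congr 1 <;> ext r <;> push_cast <;> constructor <;> intro h <;>
    linear_combination -h

lemma count_natCast_eq_two_mul_succ (m n : ℕ) (hm : 0 < m) :
    Nat.count (fun j => (j : ZMod m) = n) (2 * (n + 1)) = n / m + (n + 1) / m + 1 := by
  rw [show 2 * (n + 1) = n + (n + 1 + 1) by ring, Nat.count_add, Nat.count_succ']
  have below : Nat.count (fun j => (j : ZMod m) = n) n = n / m := by
    simp_rw [ZMod.natCast_eq_natCast_iff]
    simp [Nat.count_modEq_card _ hm]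
  have above : Nat.count (fun k => ((n + (k + 1) : ℕ) : ZMod m) = n) (n + 1) = (n + 1) / m := by
    rw [Nat.count_eq_card_filter_range, ← Nat.card_multiples]
    refine congrArg card (filter_congr fun k _ => ?_)
    rw [Nat.cast_add, add_eq_left, ZMod.natCast_eq_zero_iff]
  simp only [above, below, Nat.add_zero, if_true]
  ring

theorem stmt0_general (m n p t : ℕ) (hn : n = p * m + t) (ht : t < m) :
    2 * nu m 0 (Iset n) + nu m 1 (Iset n) + nu m (-1) (Iset n) =
      if t = m - 1 then 4 * p + 4 else 4 * p + 2 := by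
  have hm : 0 < m := by omega
  have hdiv : n / m = p := Nat.div_eq_of_lt_le (by omega) (by rw [hn, Nat.succ_mul]; omega)
  have hdiv_succ : (n + 1) / m = if t = m - 1 then p + 1 else p := by
    split_ifs with h
    · exact Nat.div_eq_of_lt_le (by rw [Nat.succ_mul]; omega)
        (by rw [Nat.succ_mul, Nat.succ_mul]; omega)
    · exact Nat.div_eq_of_lt_le (by omega) (by rw [Nat.succ_mul]; omega)
  calc 2 * nu m 0 (Iset n) + nu m 1 (Iset n) + nu m (-1) (Iset n)
      = 2 * (nu m 0 (Iset n) + nu m 1 (Iset n)) := by rw [nu_neg_Iset]; ring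
    _ = 2 * (n / m + (n + 1) / m + 1) := by
      rw [nu_zero_add_nu_one_Iset, count_natCast_eq_two_mul_succ _ _ hm]
    _ = _ := by rw [hdiv, hdiv_succ]; split_ifs <;> ring

theorem stmt0 (m n p t : ℕ) (hm : 3 ≤ m) (hn : n = p * m + t) (ht : t < m) :
    2 * nu m 0 (Iset n) + nu m 1 (Iset n) + nu m (-1) (Iset n) =
      if t = m - 1 then 4 * p + 4 else 4 * p + 2 :=
  stmt0_general m n p t hn ht
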